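/- The optimal TRANSLATE composite effective sample size is additive across cohorts: with cohort ESS Q_s := N_s / E[ψ_s²(Z)|S=s] and composite ESS Q_N(γ) := N / E[w_γ²(S,Z)] for the mixture with prevalences π_s, if the empirical prevalences satisfy π̂_s = N_s/N = π_s exactly, then max over probability vectors γ of Q_N(γ) equals Σ_{s=0}^{J} Q_s. -/

import Mathlib

open MeasureTheory

/-- additivity of the optimal TRANSLATE composite ESS: when the
empirical prevalences equal the true ones (N_s = N·π_s), the maximum over
probability vectors γ of the composite ESS Q_N(γ) = N / ∑_s (γ_s²/π_s)·m_s
equals the sum of cohort ESS values ∑_s N_s/m_s, with m_s = E[ψ_s²|S=s]. -/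
theorem translate_ess_additivity
    {Z : Type*} [MeasurableSpace Z] (μ : Measure Z) (J : ℕ)
    (f : Fin (J + 1) → Z → ℝ) (π : Fin (J + 1) → ℝ) (N : ℝ)
    (m : Fin (J + 1) → ℝ)
    (hfpos : ∀ s z, 0 < f s z)
    (hfmeas : ∀ s, Measurable (f s))
    (hfint : ∀ s, Integrable (f s) μ)
    (hfone : ∀ s, ∫ z, f s z ∂μ = 1)
    (hπpos : ∀ s, 0 < π s)
    (hπsum : ∑ s, π s = 1)
    (hN : 0 < N)
    (hm : ∀ s, m s = ∫ z, (f 0 z / f s z) ^ 2 * f s z ∂μ)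
    (hmint : ∀ s, Integrable (fun z => (f 0 z / f s z) ^ 2 * f s z) μ)
    (hmpos : ∀ s, 0 < m s) :
    IsGreatest {q : ℝ | ∃ γ : Fin (J + 1) → ℝ,
        (∀ s, 0 ≤ γ s) ∧ (∑ s, γ s = 1) ∧
        q = N / ∑ s, (γ s ^ 2 / π s) * m s}
      (∑ s, (N * π s) / m s) := by
  set C : ℝ := ∑ s, π s / m s with hC
  have hCpos : 0 < C := Finset.sum_pos (fun s _ => div_pos (hπpos s) (hmpos s)) ⟨0, Finset.mem_univ 0⟩
  have hsum_eq : (∑ s, (N * π s) / m s) = N * C := by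
    rw [hC, Finset.mul_sum]
    congr 1; ext s; rw [mul_div_assoc]
  constructor
  · -- membership
    refine ⟨fun s => (π s / m s) / C, ?_, ?_, ?_⟩
    · intro s
      exact div_nonneg (div_nonneg (hπpos s).le (hmpos s).le) hCpos.le
    · rw [← Finset.sum_div, ← hC, div_self hCpos.ne']
    · have key : (∑ s, (((π s / m s) / C) ^ 2 / π s) * m s) = 1 / C := by
        have : ∀ s : Fin (J+1), (((π s / m s) / C) ^ 2 / π s) * m s = (π s / m s) / C ^ 2 := by
          intro s
          field_simp [(hπpos s).ne', (hmpos s).ne', hCpos.ne']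
        rw [Finset.sum_congr rfl (fun s _ => this s), ← Finset.sum_div, ← hC]
        rw [sq]
        field_simp
      rw [key, hsum_eq]
      field_simp
  · -- upper bound
    rintro q ⟨γ, hγ0, hγ1, rfl⟩
    set A : ℝ := ∑ s, (γ s ^ 2 / π s) * m s with hA
    have cauchy : (∑ s, (γ s * Real.sqrt (m s / π s)) * Real.sqrt (π s / m s)) ^ 2
        ≤ (∑ s, (γ s * Real.sqrt (m s / π s)) ^ 2) * (∑ s, Real.sqrt (π s / m s) ^ 2) :=
      Finset.sum_mul_sq_le_sq_mul_sq _ _ _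
    have h1 : ∀ s : Fin (J+1), (γ s * Real.sqrt (m s / π s)) * Real.sqrt (π s / m s) = γ s := by
      intro s
      rw [mul_assoc, ← Real.sqrt_mul (div_nonneg (hmpos s).le (hπpos s).le)]
      have : m s / π s * (π s / m s) = 1 := by
        rw [div_mul_div_comm, mul_comm]
        exact div_self (mul_pos (hπpos s) (hmpos s)).ne'
      rw [this, Real.sqrt_one, mul_one]
    have h2 : ∀ s : Fin (J+1), (γ s * Real.sqrt (m s / π s)) ^ 2 = (γ s ^ 2 / π s) * m s := by
      intro s
      rw [mul_pow, Real.sq_sqrt (div_nonneg (hmpos s).le (hπpos s).le)]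
      ring
    have h3 : ∀ s : Fin (J+1), Real.sqrt (π s / m s) ^ 2 = π s / m s := by
      intro s
      exact Real.sq_sqrt (div_nonneg (hπpos s).le (hmpos s).le)
    rw [Finset.sum_congr rfl (fun s _ => h1 s)] at cauchy
    rw [Finset.sum_congr rfl (fun s _ => h2 s)] at cauchy
    rw [Finset.sum_congr rfl (fun s _ => h3 s)] at cauchy
    rw [hγ1, one_pow, ← hA, ← hC] at cauchy
    have hApos : 0 < A := by
      by_contra h
      push_neg at h
      have : A * C ≤ 0 := mul_nonpos_of_nonpos_of_nonneg h hCpos.le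
      linarith
    rw [hsum_eq]
    rw [div_le_iff₀ hApos]
    calc N = N * 1 := (mul_one N).symm
      _ ≤ N * (A * C) := by nlinarith
      _ = N * C * A := by ring
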